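/- arXiv:1912.13067 — 4 statements merged into one kernel-verified Lean document; each statement's English description precedes it below -/
import Mathlib

section
/- If λ : [0,T] → [0,∞) is integrable and F̄, Ḡ : [0,∞) → [0,1] are nonincreasing with ρ₀ ∈ [0,1], then any measurable function ρ : [0,T] → ℝ satisfying ρ(t) = ρ₀·Ḡ(t) + ∫₀ᵗ 𝟙{ρ(u)<1}·F̄(t−u)·λ(u) du for all t ∈ [0,T] takes values in [0,1]. -/
open MeasureTheory Set

/-!
For `s ≤ t`, monotonicity of `F̄` and `Ḡ` together with `F̄ ≤ 1` give the increment
bound `ρ t ≤ ρ s + ∫ u in s..t, 𝟙{ρ u < 1} λ u`. Let `s` be the supremum of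
`{u ∈ [0, t] | ρ u ≤ 1}`, which contains `0` because `ρ 0 = ρ₀ Ḡ 0`. The bound
`ρ t ≤ 1 + ∫ u in s..t, …` holds on that set and is a closed condition in `s` (the primitive
is continuous), so it holds at the supremum; there the integral vanishes, since `ρ > 1` on
`(s, t]`.
-/

theorem le_of_le_add_integral {ρ q : ℝ → ℝ} {a t c : ℝ} (hat : a ≤ t)
    (hq : IntegrableOn q (Icc a t)) (ha : ρ a ≤ c)
    (hq_zero : ∀ u ∈ Icc a t, c < ρ u → q u = 0)
    (hinc : ∀ s ∈ Icc a t, ρ s ≤ c → ρ t ≤ ρ s + ∫ u in s..t, q u) : ρ t ≤ c := by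
  set A := {u ∈ Icc a t | ρ u ≤ c}
  have haA : a ∈ A := ⟨left_mem_Icc.2 hat, ha⟩
  have hA_bdd : BddAbove A := bddAbove_Icc.mono (sep_subset _ _)
  set s := sSup A
  have hs : s ∈ Icc a t := ⟨le_csSup hA_bdd haA, csSup_le ⟨a, haA⟩ fun u hu => hu.1.2⟩
  set B := Icc a t ∩ (fun u => c + ∫ x in u..t, q x) ⁻¹' Ici (ρ t)
  have hB_closed : IsClosed B := by
    refine ContinuousOn.preimage_isClosed_of_isClosed ?_ isClosed_Icc isClosed_Ici
    rw [← uIcc_of_le hat] at hq ⊢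
    exact continuousOn_const.add (intervalIntegral.continuousOn_primitive_interval_left hq)
  have hAB : A ⊆ B := fun u hu => ⟨hu.1, by
    change ρ t ≤ c + _
    linarith [hinc u hu.1 hu.2, hu.2]⟩
  have hsB : s ∈ B := closure_minimal hAB hB_closed (csSup_mem_closure ⟨a, haA⟩ hA_bdd)
  have hq_tail : ∫ x in s..t, q x = 0 := by
    rw [intervalIntegral.integral_of_le hs.2]
    refine setIntegral_eq_zero_of_forall_eq_zero fun u hu => ?_
    have hu_mem : u ∈ Icc a t := ⟨hs.1.trans hu.1.le, hu.2⟩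
    refine hq_zero u hu_mem (lt_of_not_ge fun hρu => ?_)
    exact (le_csSup hA_bdd ⟨hu_mem, hρu⟩).not_gt hu.1
  have hρt : ρ t ≤ c + ∫ x in s..t, q x := hsB.2
  rwa [hq_tail, add_zero] at hρt

theorem integrableOn_ite_of_measurableSet {α : Type*} [MeasurableSpace α] {μ : Measure α}
    {p : α → Prop} [DecidablePred p] {f : α → ℝ} {s : Set α} (hp : MeasurableSet {u | p u})
    (hf : IntegrableOn f s μ) : IntegrableOn (fun u => if p u then f u else 0) s μ := by
  refine (hf.indicator hp).congr (ae_of_all _ fun u => ?_)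
  simp [indicator_apply]

section AntitoneKernel

variable {p : ℝ → Prop} [DecidablePred p] {F lam : ℝ → ℝ} {s t : ℝ}

theorem integrableOn_ite_antitone_mul (hp : MeasurableSet {u | p u})
    (hF_mono : AntitoneOn F (Ici 0)) (hF_range : ∀ x ∈ Ici (0:ℝ), F x ∈ Icc (0:ℝ) 1)
    (hlam : IntegrableOn lam (Icc 0 t)) :
    IntegrableOn (fun u => if p u then F (t - u) * lam u else 0) (Icc 0 t) := by
  refine integrableOn_ite_of_measurableSet hp (hlam.bdd_mul (c := 1) ?_ ?_)
  · refine (aemeasurable_restrict_of_monotoneOn measurableSet_Icc ?_).aestronglyMeasurable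
    intro u hu v hv huv
    exact hF_mono (by simpa using hv.2) (by simpa using hu.2) (by linarith)
  · refine ae_restrict_of_forall_mem measurableSet_Icc fun u hu => ?_
    have := hF_range (t - u) (by simpa using hu.2)
    rw [Real.norm_eq_abs, abs_le]
    constructor <;> linarith [this.1, this.2]

theorem integral_ite_antitone_mul_le (hp : MeasurableSet {u | p u})
    (hF_mono : AntitoneOn F (Ici 0)) (hF_range : ∀ x ∈ Ici (0:ℝ), F x ∈ Icc (0:ℝ) 1)
    (hlam : IntegrableOn lam (Icc 0 t)) (hlam_nonneg : ∀ u ∈ Icc (0:ℝ) t, 0 ≤ lam u)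
    (hs : 0 ≤ s) (hst : s ≤ t) :
    ∫ u in (0:ℝ)..t, (if p u then F (t - u) * lam u else 0) ≤
      (∫ u in (0:ℝ)..s, (if p u then F (s - u) * lam u else 0)) +
        ∫ u in s..t, (if p u then lam u else 0) := by
  have hker := integrableOn_ite_antitone_mul hp hF_mono hF_range hlam
  have hker_s := integrableOn_ite_antitone_mul hp hF_mono hF_range
    (hlam.mono_set (Icc_subset_Icc_right hst))
  have hind := integrableOn_ite_of_measurableSet hp (hlam.mono_set (Icc_subset_Icc_left hs))
  have hker_0s := (intervalIntegrable_iff_integrableOn_Icc_of_le hs).2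
    (hker.mono_set (Icc_subset_Icc_right hst))
  have hker_st := (intervalIntegrable_iff_integrableOn_Icc_of_le hst).2
    (hker.mono_set (Icc_subset_Icc_left hs))
  rw [← intervalIntegral.integral_add_adjacent_intervals hker_0s hker_st]
  gcongr ?_ + ?_
  · refine intervalIntegral.integral_mono_on hs hker_0s
      ((intervalIntegrable_iff_integrableOn_Icc_of_le hs).2 hker_s) fun u hu => ?_
    split_ifs
    · exact mul_le_mul_of_nonneg_right
        (hF_mono (by simpa using hu.2) (by rw [mem_Ici]; linarith [hu.2]) (by linarith))
        (hlam_nonneg u ⟨hu.1, hu.2.trans hst⟩)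
    · exact le_rfl
  · refine intervalIntegral.integral_mono_on hst hker_st
      ((intervalIntegrable_iff_integrableOn_Icc_of_le hst).2 hind) fun u hu => ?_
    split_ifs
    · exact mul_le_of_le_one_left (hlam_nonneg u ⟨hs.trans hu.1, hu.2⟩)
        (hF_range (t - u) (by simpa using hu.2)).2
    · exact le_rfl

end AntitoneKernel

theorem stmt_0_general (T : ℝ) (lam F G ρ : ℝ → ℝ) (ρ0 : ℝ)
    (hlam_int : IntegrableOn lam (Icc 0 T))
    (hlam_nonneg : ∀ u ∈ Icc (0:ℝ) T, 0 ≤ lam u)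
    (hF_mono : AntitoneOn F (Ici 0))
    (hF_range : ∀ x ∈ Ici (0:ℝ), F x ∈ Icc (0:ℝ) 1)
    (hG_mono : AntitoneOn G (Ici 0))
    (hG_range : ∀ x ∈ Ici (0:ℝ), G x ∈ Icc (0:ℝ) 1)
    (hρ0 : ρ0 ∈ Icc (0:ℝ) 1)
    (hρ_meas : Measurable ρ)
    (heq : ∀ t ∈ Icc (0:ℝ) T,
      ρ t = ρ0 * G t + ∫ u in (0:ℝ)..t, (if ρ u < 1 then F (t - u) * lam u else 0)) :
    ∀ t ∈ Icc (0:ℝ) T, ρ t ∈ Icc (0:ℝ) 1 := by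
  rintro t ⟨ht0, htT⟩
  have hA : MeasurableSet {u | ρ u < 1} := measurableSet_lt hρ_meas measurable_const
  have hinc : ∀ s ∈ Icc 0 t,
      ρ t ≤ ρ s + ∫ u in s..t, (if ρ u < 1 then lam u else 0) := by
    rintro s ⟨hs, hst⟩
    have hker := integral_ite_antitone_mul_le hA hF_mono hF_range
      (hlam_int.mono_set (Icc_subset_Icc_right htT))
      (fun u hu => hlam_nonneg u ⟨hu.1, hu.2.trans htT⟩) hs hst
    have hG := mul_le_mul_of_nonneg_left (hG_mono hs (hs.trans hst) hst) hρ0.1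
    rw [heq t ⟨ht0, htT⟩, heq s ⟨hs, hst.trans htT⟩]
    linarith
  refine ⟨?_, ?_⟩
  · rw [heq t ⟨ht0, htT⟩]
    refine add_nonneg (mul_nonneg hρ0.1 (hG_range t ht0).1)
      (intervalIntegral.integral_nonneg ht0 fun u hu => ?_)
    split_ifs
    · exact mul_nonneg (hF_range _ (by simpa using hu.2)).1
        (hlam_nonneg u ⟨hu.1, hu.2.trans htT⟩)
    · exact le_rfl
  · have hρ_zero : ρ 0 ≤ 1 := by
      rw [heq 0 ⟨le_rfl, ht0.trans htT⟩, intervalIntegral.integral_same, add_zero]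
      exact mul_le_one₀ hρ0.2 (hG_range 0 self_mem_Ici).1 (hG_range 0 self_mem_Ici).2
    exact le_of_le_add_integral ht0
      (integrableOn_ite_of_measurableSet hA (hlam_int.mono_set (Icc_subset_Icc_right htT)))
      hρ_zero (fun u _ hu => if_neg hu.not_gt) (fun s hs _ => hinc s hs)

theorem stmt_0 (T : ℝ) (hT : 0 < T) (lam F G ρ : ℝ → ℝ) (ρ0 : ℝ)
    (hlam_int : IntegrableOn lam (Icc 0 T))
    (hlam_nonneg : ∀ u ∈ Icc (0:ℝ) T, 0 ≤ lam u)
    (hF_mono : AntitoneOn F (Ici 0))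
    (hF_range : ∀ x ∈ Ici (0:ℝ), F x ∈ Icc (0:ℝ) 1)
    (hG_mono : AntitoneOn G (Ici 0))
    (hG_range : ∀ x ∈ Ici (0:ℝ), G x ∈ Icc (0:ℝ) 1)
    (hρ0 : ρ0 ∈ Icc (0:ℝ) 1)
    (hρ_meas : Measurable ρ)
    (heq : ∀ t ∈ Icc (0:ℝ) T,
      ρ t = ρ0 * G t + ∫ u in (0:ℝ)..t, (if ρ u < 1 then F (t - u) * lam u else 0)) :
    ∀ t ∈ Icc (0:ℝ) T, ρ t ∈ Icc (0:ℝ) 1 :=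
  stmt_0_general T lam F G ρ ρ0 hlam_int hlam_nonneg hF_mono hF_range hG_mono hG_range hρ0 hρ_meas
    heq
end

section
/- Let ρ solve ρ(t) = ρ₀·Ḡ(t) + ∫₀ᵗ 𝟙{ρ(u)<1}·F̄(t−u)·λ(u) du on [0,T] with Ḡ continuous. Then ρ is continuous, and hence the preimage ρ⁻¹([0,1)) ∩ [0,T] is relatively open in [0,T]. -/
/-!
Treating `h = 𝟙{ρ < 1} λ` as a fixed integrable function, the right-hand side of the equation is
`ρ₀ Ḡ(t)` plus the truncated convolution `∫₀ᵗ F̄(t - u) h(u) du`. Writing it as `∫₀ᵀ 𝟙_{[0,T]}(t - u) F̄(t - u) h(u) du`, the integrand is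
continuous in `t` except at the two values of `u` where `t - u` hits `0` or `T`, and is dominated
by `sup |F̄| · |h|`, so dominated convergence makes it continuous. Once `ρ` is continuous,
`{ρ < 1}` is relatively open, and it equals `ρ⁻¹[0, 1)` because `ρ ≥ 0`.
-/

open MeasureTheory Set

section TruncatedConvolution

variable {E : Type*} [NormedAddCommGroup E] [NormedSpace ℝ E] {F : ℝ → ℝ} {h : ℝ → E} {T : ℝ}

theorem intervalIntegral_comp_sub_smul_eq_setIntegral_indicator {t : ℝ} (ht : t ∈ Icc 0 T) :
    ∫ u in (0:ℝ)..t, F (t - u) • h u = ∫ u in Ioc 0 T, (Icc 0 T).indicator F (t - u) • h u := by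
  have hcut : EqOn (fun u => (Icc 0 T).indicator F (t - u) • h u)
      ((Iic t).indicator fun u => F (t - u) • h u) (Ioc 0 T) := by
    intro u hu
    by_cases hut : u ≤ t
    · have : t - u ∈ Icc 0 T := ⟨by linarith, by linarith [hu.1, ht.2]⟩
      simp [this, hut]
    · have : t - u ∉ Icc 0 T := fun hmem => hut (by linarith [hmem.1])
      simp [this, hut]
  rw [setIntegral_congr_fun measurableSet_Ioc hcut, setIntegral_indicator measurableSet_Iic,
    Ioc_inter_Iic, min_eq_right ht.2, intervalIntegral.integral_of_le ht.1]

theorem ContinuousOn.ae_continuousAt_indicator_comp_sub (hF : ContinuousOn F (Icc 0 T))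
    (hT : 0 ≤ T) (t₀ : ℝ) :
    ∀ᵐ u, ContinuousAt (fun t => (Icc 0 T).indicator F (t - u)) t₀ := by
  filter_upwards [(Set.toFinite {t₀, t₀ - T}).countable.ae_notMem volume] with u hu
  have hfr : t₀ - u ∉ frontier (Icc 0 T) := by
    rw [frontier_Icc hT]
    simp only [mem_insert_iff, mem_singleton_iff] at hu ⊢
    rintro (h0 | hT') <;> apply hu <;> [left; right] <;> linarith
  have hsub : ContinuousAt (fun t : ℝ => t - u) t₀ := continuousAt_id.sub continuousAt_const
  exact ((hF.mono interior_subset).continuousAt_indicator hfr).comp (f := fun t => t - u) hsub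

theorem continuousOn_intervalIntegral_comp_sub_smul (hF : ContinuousOn F (Icc 0 T))
    (hh : IntegrableOn h (Icc 0 T)) :
    ContinuousOn (fun t => ∫ u in (0:ℝ)..t, F (t - u) • h u) (Icc 0 T) := by
  set F' := (Icc 0 T).indicator F
  obtain ⟨C, hC⟩ : ∃ C, ∀ x, ‖F' x‖ ≤ C := by
    obtain ⟨C, hC⟩ := isCompact_Icc.exists_bound_of_continuousOn hF
    refine ⟨max C 0, fun x => ?_⟩
    by_cases hx : x ∈ Icc 0 T
    · exact le_max_of_le_left ((norm_indicator_le_norm_self F x).trans (hC x hx))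
    · simp [F', hx]
  have hF'_meas : Measurable F' := by
    classical
    have := hF.measurable_piecewise (g := 0) continuousOn_const measurableSet_Icc
    rwa [piecewise_eq_indicator] at this
  refine ContinuousOn.congr (fun t₀ ht₀ => ?_)
    fun t ht => intervalIntegral_comp_sub_smul_eq_setIntegral_indicator ht
  have hh' : IntegrableOn h (Ioc 0 T) := hh.mono_set Ioc_subset_Icc_self
  refine continuousWithinAt_of_dominated (bound := fun u => C * ‖h u‖) ?_ ?_
    (hh'.norm.const_mul C) ?_
  · exact Filter.Eventually.of_forall fun _ =>
      (hF'_meas.comp (measurable_const.sub measurable_id)).aestronglyMeasurable.smul hh'.1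
  · exact Filter.Eventually.of_forall fun _ => ae_of_all _ fun u => by
      rw [norm_smul]
      exact mul_le_mul_of_nonneg_right (hC _) (norm_nonneg _)
  · refine ae_restrict_of_ae ?_
    filter_upwards [hF.ae_continuousAt_indicator_comp_sub (ht₀.1.trans ht₀.2) t₀] with u hu
    exact (hu.smul continuousAt_const).continuousWithinAt

end TruncatedConvolution

theorem stmt_4_general (T : ℝ) (lam F G ρ : ℝ → ℝ) (ρ0 : ℝ)
    (hlam_int : IntegrableOn lam (Icc 0 T))
    (hF_cont : ContinuousOn F (Ici 0))
    (hG_cont : ContinuousOn G (Ici 0))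
    (hρ_meas : Measurable ρ)
    (hρ_range : ∀ t ∈ Icc (0:ℝ) T, ρ t ∈ Icc (0:ℝ) 1)
    (heq : ∀ t ∈ Icc (0:ℝ) T,
      ρ t = ρ0 * G t + ∫ u in (0:ℝ)..t, (if ρ u < 1 then F (t - u) * lam u else 0)) :
    ContinuousOn ρ (Icc 0 T) ∧
    ∃ U : Set ℝ, IsOpen U ∧ ρ ⁻¹' (Ico 0 1) ∩ Icc 0 T = U ∩ Icc 0 T := by
  have hrate : IntegrableOn ({u | ρ u < 1}.indicator lam) (Icc 0 T) :=
    hlam_int.indicator (measurableSet_lt hρ_meas measurable_const)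
  have hρ_cont : ContinuousOn ρ (Icc 0 T) := by
    have hrhs : ContinuousOn (fun t => ρ0 * G t +
        ∫ u in (0:ℝ)..t, F (t - u) • {u | ρ u < 1}.indicator lam u) (Icc 0 T) :=
      (continuousOn_const.mul (hG_cont.mono Icc_subset_Ici_self)).add
        (continuousOn_intervalIntegral_comp_sub_smul (hF_cont.mono Icc_subset_Ici_self) hrate)
    refine hrhs.congr fun t ht => ?_
    simp only [heq t ht, smul_eq_mul, indicator_apply, mem_ofPred_eq, mul_ite, mul_zero]
  refine ⟨hρ_cont, ?_⟩
  obtain ⟨U, hU_open, hU⟩ := continuousOn_iff'.1 hρ_cont (Iio 1) isOpen_Iio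
  refine ⟨U, hU_open, ?_⟩
  rw [← hU]
  ext t
  simp only [mem_inter_iff, mem_preimage, mem_Ico, mem_Iio]
  exact ⟨fun ⟨⟨_, hlt⟩, ht⟩ => ⟨hlt, ht⟩, fun ⟨hlt, ht⟩ => ⟨⟨(hρ_range t ht).1, hlt⟩, ht⟩⟩

theorem stmt_4 (T : ℝ) (hT : 0 < T) (lam F G ρ : ℝ → ℝ) (ρ0 : ℝ)
    (hρ0 : ρ0 ∈ Icc (0:ℝ) 1)
    (hlam_int : IntegrableOn lam (Icc 0 T))
    (hlam_nonneg : ∀ u ∈ Icc (0:ℝ) T, 0 ≤ lam u)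
    (hF_mono : AntitoneOn F (Ici 0))
    (hF_range : ∀ x ∈ Ici (0:ℝ), F x ∈ Icc (0:ℝ) 1)
    (hF_cont : ContinuousOn F (Ici 0))
    (hG_mono : AntitoneOn G (Ici 0))
    (hG_range : ∀ x ∈ Ici (0:ℝ), G x ∈ Icc (0:ℝ) 1)
    (hG_cont : ContinuousOn G (Ici 0))
    (hρ_meas : Measurable ρ)
    (hρ_range : ∀ t ∈ Icc (0:ℝ) T, ρ t ∈ Icc (0:ℝ) 1)
    (heq : ∀ t ∈ Icc (0:ℝ) T,
      ρ t = ρ0 * G t + ∫ u in (0:ℝ)..t, (if ρ u < 1 then F (t - u) * lam u else 0)) :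
    ContinuousOn ρ (Icc 0 T) ∧
    ∃ U : Set ℝ, IsOpen U ∧ ρ ⁻¹' (Ico 0 1) ∩ Icc 0 T = U ∩ Icc 0 T :=
  stmt_4_general T lam F G ρ ρ0 hlam_int hF_cont hG_cont hρ_meas hρ_range heq
end

section
/- Suppose ρ₀ < 1, λ integrable, and F̄, Ḡ nonincreasing survival functions with Ḡ continuous. Define τ₁ = inf{ t > 0 : ρ₀·Ḡ(t) + ∫₀ᵗ F̄(t−u)·λ(u) du = 1 } (with inf ∅ = T). Then any two solutions ρ¹, ρ² of the Volterra equation ρ(t) = ρ₀·Ḡ(t) + ∫₀ᵗ 𝟙{ρ(u)<1}·F̄(t−u)·λ(u) du agree on [0, τ₁): both equal ρ(t) = ρ₀·Ḡ(t) + ∫₀ᵗ F̄(t−u)·λ(u) du there. -/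
open MeasureTheory Set

lemma key_lt_one (T : ℝ) (lam F G ρ : ℝ → ℝ) (ρ0 : ℝ)
    (hρ0 : ρ0 ∈ Ico (0:ℝ) 1)
    (hG_range : ∀ x ∈ Ici (0:ℝ), G x ∈ Icc (0:ℝ) 1)
    (hρ_cont : ContinuousOn ρ (Icc 0 T))
    (hρ_range : ∀ t ∈ Icc (0:ℝ) T, ρ t ∈ Icc (0:ℝ) 1)
    (heq : ∀ t ∈ Icc (0:ℝ) T,
      ρ t = ρ0 * G t + ∫ u in (0:ℝ)..t, (if ρ u < 1 then F (t - u) * lam u else 0))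
    (t : ℝ) (ht : t ∈ Icc (0:ℝ) T)
    (hne : ∀ s ∈ Ioc (0:ℝ) t, ρ0 * G s + (∫ u in (0:ℝ)..s, F (s - u) * lam u) ≠ 1) :
    ∀ u ∈ Icc (0:ℝ) t, ρ u < 1 := by
  have hρ00 : ρ 0 < 1 := by
    have h0 : (0:ℝ) ∈ Icc (0:ℝ) T := ⟨le_refl _, ht.1.trans ht.2⟩
    have := heq 0 h0
    rw [intervalIntegral.integral_same] at this
    have hG0 := hG_range 0 (by simp)
    calc ρ 0 = ρ0 * G 0 + 0 := this
      _ = ρ0 * G 0 := by ring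
      _ ≤ ρ0 := mul_le_of_le_one_right hρ0.1 hG0.2
      _ < 1 := hρ0.2
  by_contra hc
  push_neg at hc
  obtain ⟨v, hv, hv1⟩ := hc
  set A : Set ℝ := Icc 0 t ∩ ρ ⁻¹' {1} with hA
  have hsubT : Icc (0:ℝ) t ⊆ Icc 0 T := Icc_subset_Icc (le_refl _) ht.2
  have hAne : A.Nonempty := by
    refine ⟨v, hv, ?_⟩
    have := (hρ_range v (hsubT hv)).2
    exact le_antisymm this hv1
  have hAbdd : BddBelow A := ⟨0, fun x hx => hx.1.1⟩
  have hAclosed : IsClosed A :=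
    (hρ_cont.mono hsubT).preimage_isClosed_of_isClosed isClosed_Icc isClosed_singleton
  set s := sInf A with hs
  have hsA : s ∈ A := hAclosed.csInf_mem hAne hAbdd
  have hsIcc : s ∈ Icc (0:ℝ) t := hsA.1
  have hρs : ρ s = 1 := hsA.2
  have hspos : 0 < s := by
    rcases lt_or_eq_of_le hsIcc.1 with h | h
    · exact h
    · exact absurd (h ▸ hρs) (by simpa [← h] using hρ00.ne)
  -- below s, ρ < 1
  have hbelow : ∀ u, 0 ≤ u → u < s → ρ u < 1 := by
    intro u hu0 hus
    have husT : u ∈ Icc (0:ℝ) T := ⟨hu0, (hus.le.trans hsIcc.2).trans ht.2⟩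
    rcases lt_or_eq_of_le (hρ_range u husT).2 with h | h
    · exact h
    · exact absurd (csInf_le hAbdd ⟨⟨hu0, hus.le.trans hsIcc.2⟩, h⟩) (not_le.mpr hus)
  have hsT : s ∈ Icc (0:ℝ) T := hsubT hsIcc
  have hint : (∫ u in (0:ℝ)..s, (if ρ u < 1 then F (s - u) * lam u else 0))
      = ∫ u in (0:ℝ)..s, F (s - u) * lam u := by
    apply intervalIntegral.integral_congr_ae
    have hns : ∀ᵐ x : ℝ, x ≠ s := by
      have : (volume : Measure ℝ) {s} = 0 := measure_singleton s
      filter_upwards [measure_eq_zero_iff_ae_notMem.mp this] with x hx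
      simpa using hx
    filter_upwards [hns] with x hx hxI
    rw [uIoc_of_le hspos.le] at hxI
    have hxs : x < s := lt_of_le_of_ne hxI.2 hx
    rw [if_pos (hbelow x hxI.1.le hxs)]
  have := heq s hsT
  rw [hint, hρs] at this
  exact hne s ⟨hspos, hsIcc.2⟩ this.symm

theorem stmt_5 (T : ℝ) (hT : 0 < T) (lam F G ρ1 ρ2 : ℝ → ℝ) (ρ0 τ1 : ℝ)
    (hρ0 : ρ0 ∈ Ico (0:ℝ) 1)
    (hlam_int : IntegrableOn lam (Icc 0 T))
    (hlam_nonneg : ∀ u ∈ Icc (0:ℝ) T, 0 ≤ lam u)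
    (hF_mono : AntitoneOn F (Ici 0))
    (hF_range : ∀ x ∈ Ici (0:ℝ), F x ∈ Icc (0:ℝ) 1)
    (hG_mono : AntitoneOn G (Ici 0))
    (hG_range : ∀ x ∈ Ici (0:ℝ), G x ∈ Icc (0:ℝ) 1)
    (hG_cont : ContinuousOn G (Ici 0))
    (hτ1 : τ1 = open Classical in if h : {t : ℝ | 0 < t ∧
        ρ0 * G t + (∫ u in (0:ℝ)..t, F (t - u) * lam u) = 1} = ∅ then T
      else sInf {t : ℝ | 0 < t ∧
        ρ0 * G t + (∫ u in (0:ℝ)..t, F (t - u) * lam u) = 1})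
    (hρ1_cont : ContinuousOn ρ1 (Icc 0 T))
    (hρ1_range : ∀ t ∈ Icc (0:ℝ) T, ρ1 t ∈ Icc (0:ℝ) 1)
    (hρ2_cont : ContinuousOn ρ2 (Icc 0 T))
    (hρ2_range : ∀ t ∈ Icc (0:ℝ) T, ρ2 t ∈ Icc (0:ℝ) 1)
    (heq1 : ∀ t ∈ Icc (0:ℝ) T,
      ρ1 t = ρ0 * G t + ∫ u in (0:ℝ)..t, (if ρ1 u < 1 then F (t - u) * lam u else 0))
    (heq2 : ∀ t ∈ Icc (0:ℝ) T,
      ρ2 t = ρ0 * G t + ∫ u in (0:ℝ)..t, (if ρ2 u < 1 then F (t - u) * lam u else 0)) :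
    ∀ t ∈ Icc (0:ℝ) T, t < τ1 →
      ρ1 t = ρ0 * G t + (∫ u in (0:ℝ)..t, F (t - u) * lam u) ∧
      ρ2 t = ρ0 * G t + (∫ u in (0:ℝ)..t, F (t - u) * lam u) := by
  intro t ht htτ
  set S : Set ℝ := {t : ℝ | 0 < t ∧
      ρ0 * G t + (∫ u in (0:ℝ)..t, F (t - u) * lam u) = 1} with hS
  have hne : ∀ s ∈ Ioc (0:ℝ) t, ρ0 * G s + (∫ u in (0:ℝ)..s, F (s - u) * lam u) ≠ 1 := by
    intro s hs hcontra
    have hsS : s ∈ S := ⟨hs.1, hcontra⟩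
    by_cases hE : S = ∅
    · rw [hE] at hsS; exact hsS
    · rw [hτ1, dif_neg hE] at htτ
      have : sInf S ≤ s := csInf_le ⟨0, fun x hx => hx.1.le⟩ hsS
      exact absurd (this.trans hs.2) (not_le.mpr htτ)
  have h1 := key_lt_one T lam F G ρ1 ρ0 hρ0 hG_range hρ1_cont hρ1_range heq1 t ht hne
  have h2 := key_lt_one T lam F G ρ2 ρ0 hρ0 hG_range hρ2_cont hρ2_range heq2 t ht hne
  constructor
  · rw [heq1 t ht]
    congr 1
    apply intervalIntegral.integral_congr
    intro x hx
    rw [uIcc_of_le ht.1] at hx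
    simp [if_pos (h1 x hx)]
  · rw [heq2 t ht]
    congr 1
    apply intervalIntegral.integral_congr
    intro x hx
    rw [uIcc_of_le ht.1] at hx
    simp [if_pos (h2 x hx)]
end

section
/- Suppose λ : [0,T] → [0,∞) is integrable, F̄, Ḡ : [0,∞) → [0,1] are nonincreasing with Ḡ and F̄ continuous, and ρ₀ ∈ [0,1]. Then the Volterra equation ρ(t) = ρ₀·Ḡ(t) + ∫₀ᵗ 𝟙{ρ(u)<1}·F̄(t−u)·λ(u) du has at most one continuous solution ρ : [0,T] → [0,1]. -/
/-!
Put `h = ρ1 - ρ2` and `g = (𝟙{ρ1 < 1} - 𝟙{ρ2 < 1}) λ`. Then `h(t) = ∫₀ᵗ F̄(t - u) g(u) du`, and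
`g h < 0` wherever `g ≠ 0`: the density can only push the difference back towards zero.
Continuous induction reduces uniqueness to a short interval `[t₀, c]` past a point up to which
`h = 0`, and on it `F̄ ≥ F̄(c - t₀) > 0`. Abel's lower bound for integrals against a monotone
weight gives `h(b) ≥ F̄(0) (W(b) - M) + F̄(b - t₀) M`, where `W` is the primitive of `g` from `t₀`
and `M = max W`. If `M > 0`, take `b` just after the last time `W` is below a level close to `M`
with `g(b) > 0`: then `h(b) > 0` contradicts `g(b) h(b) < 0`. So `W ≤ 0`, by symmetry `W ≥ 0`,
and Abel's bound with `M = 0` then gives `h = 0`.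
-/

open MeasureTheory Set intervalIntegral

theorem le_sum_range_mul_sub {k w : ℕ → ℝ} {M : ℝ} (n : ℕ) (hk : ∀ i < n, k i ≤ k (i + 1))
    (hw0 : w 0 = 0) (hw : ∀ i ≤ n, w i ≤ M) :
    k n * (w n - M) + k 0 * M ≤ ∑ i ∈ Finset.range n, k i * (w (i + 1) - w i) := by
  induction n with
  | zero => simp [hw0]
  | succ n ih =>
    have ih := ih (fun i hi => hk i (by omega)) (fun i hi => hw i (by omega))
    have := mul_le_mul_of_nonpos_right (hk n n.lt_succ_self) (sub_nonpos.2 (hw (n + 1) le_rfl))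
    rw [Finset.sum_range_succ]
    linarith

theorem MonotoneOn.integrableOn_mul {K g : ℝ → ℝ} {a b : ℝ} (hK : MonotoneOn K (Icc a b))
    (hg : IntegrableOn g (Icc a b)) : IntegrableOn (fun u => K u * g u) (Icc a b) :=
  hg.mul_of_top_right (hK.memLp_isCompact isCompact_Icc)

theorem mul_integral_sub_le_integral_mul {K g : ℝ → ℝ} {x y : ℝ} (hxy : x ≤ y)
    (hK : MonotoneOn K (Icc x y)) (hg : IntegrableOn g (Icc x y)) :
    K x * (∫ u in x..y, g u) - (K y - K x) * ∫ u in x..y, |g u| ≤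
      ∫ u in x..y, K u * g u := by
  have hKg := (intervalIntegrable_iff_integrableOn_Icc_of_le hxy).2 (hK.integrableOn_mul hg)
  rw [← intervalIntegrable_iff_integrableOn_Icc_of_le hxy] at hg
  rw [← intervalIntegral.integral_const_mul, ← intervalIntegral.integral_const_mul,
    ← integral_sub (hg.const_mul _) (hg.abs.const_mul _)]
  refine integral_mono_on hxy ((hg.const_mul _).sub (hg.abs.const_mul _)) hKg fun u hu => ?_
  have hxu := hK (left_mem_Icc.2 hxy) hu hu.1
  have huy := hK hu (right_mem_Icc.2 hxy) hu.2
  nlinarith [neg_abs_le (g u), le_abs_self (g u), abs_nonneg (g u)]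

theorem exists_partition_abs_sub_le {V : ℝ → ℝ} {a b ε : ℝ} (hab : a ≤ b)
    (hV : ContinuousOn V (Icc a b)) (hε : 0 < ε) :
    ∃ (n : ℕ) (u : ℕ → ℝ), Monotone u ∧ u 0 = a ∧ u n = b ∧
      ∀ i < n, |V (u (i + 1)) - V (u i)| ≤ ε := by
  obtain ⟨δ, hδ, hVδ⟩ := Metric.uniformContinuousOn_iff_le.1
    (isCompact_Icc.uniformContinuousOn_of_continuous hV) ε hε
  obtain ⟨n, hn⟩ := exists_nat_gt ((b - a) / δ)
  have hn0 : (0 : ℝ) < n := (div_nonneg (sub_nonneg.2 hab) hδ.le).trans_lt hn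
  have hΔ : 0 ≤ (b - a) / n := div_nonneg (sub_nonneg.2 hab) hn0.le
  have hΔδ : (b - a) / n ≤ δ := by
    rw [div_le_iff₀ hn0]; rw [div_lt_iff₀ hδ] at hn; linarith
  set u : ℕ → ℝ := fun i => a + i * ((b - a) / n)
  have hu : Monotone u := fun i j hij => by
    simp only [u]; gcongr
  have hun : u n = b := by simp only [u]; field_simp; ring
  have hmem : ∀ i ≤ n, u i ∈ Icc a b := fun i hi =>
    ⟨le_add_of_nonneg_right (by positivity), hun ▸ hu hi⟩
  refine ⟨n, u, hu, by simp [u], hun, fun i hi => ?_⟩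
  rw [← Real.dist_eq]
  refine hVδ _ (hmem _ hi) _ (hmem _ hi.le) ?_
  rw [Real.dist_eq, abs_of_nonneg (by simp only [u]; push_cast; nlinarith)]
  simp only [u]; push_cast; linarith

theorem add_le_integral_mul_of_monotoneOn {K g : ℝ → ℝ} {a b M : ℝ} (hab : a ≤ b)
    (hK : MonotoneOn K (Icc a b)) (hg : IntegrableOn g (Icc a b))
    (hM : ∀ t ∈ Icc a b, ∫ u in a..t, g u ≤ M) :
    K b * ((∫ u in a..b, g u) - M) + K a * M ≤ ∫ u in a..b, K u * g u := by
  have hKab : 0 ≤ K b - K a := sub_nonneg.2 (hK (left_mem_Icc.2 hab) (right_mem_Icc.2 hab) hab)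
  refine le_of_forall_pos_le_add fun ε hε => ?_
  set η := ε / (K b - K a + 1)
  have hη : 0 < η := by positivity
  have hηε : η * (K b - K a) ≤ ε := by
    rw [div_mul_eq_mul_div, div_le_iff₀ (by positivity)]; nlinarith
  have hgabs : IntegrableOn (fun u => |g u|) (Icc a b) := hg.abs
  have hV : ContinuousOn (fun t => ∫ u in a..t, |g u|) (Icc a b) := by
    simpa [uIcc_of_le hab] using continuousOn_primitive_interval (μ := volume)
      (f := fun u => |g u|) (a := a) (b := b) (by rwa [uIcc_of_le hab])
  obtain ⟨n, u, hu, hu0, hun, hsmall⟩ := exists_partition_abs_sub_le hab hV hη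
  have hmem : ∀ i ≤ n, u i ∈ Icc a b := fun i hi => ⟨hu0 ▸ hu (Nat.zero_le i), hun ▸ hu hi⟩
  have hsub : ∀ i < n, Icc (u i) (u (i + 1)) ⊆ Icc a b := fun i hi =>
    Icc_subset_Icc (hmem i hi.le).1 (hmem (i + 1) hi).2
  have hII : ∀ {f : ℝ → ℝ}, IntegrableOn f (Icc a b) → ∀ x ∈ Icc a b, ∀ y ∈ Icc a b,
      IntervalIntegrable f volume x y := fun hf x hx y hy =>
    (hf.mono_set (uIcc_subset_Icc hx hy)).intervalIntegrable
  have hpiece : ∀ i < n, K (u i) * ((∫ v in a..u (i + 1), g v) - ∫ v in a..u i, g v) -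
      η * (K (u (i + 1)) - K (u i)) ≤ ∫ v in u i..u (i + 1), K v * g v := fun i hi => by
    have hle : u i ≤ u (i + 1) := hu i.le_succ
    have hK' := hK.mono (hsub i hi)
    have hbase := mul_integral_sub_le_integral_mul hle hK' (hg.mono_set (hsub i hi))
    have habs : ∫ v in u i..u (i + 1), |g v| ≤ η := by
      have := hsmall i hi
      rw [integral_interval_sub_left (hII hgabs _ (left_mem_Icc.2 hab) _ (hmem _ hi))
        (hII hgabs _ (left_mem_Icc.2 hab) _ (hmem _ hi.le))] at this
      exact (le_abs_self _).trans this
    have hKi : 0 ≤ K (u (i + 1)) - K (u i) :=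
      sub_nonneg.2 (hK' (left_mem_Icc.2 hle) (right_mem_Icc.2 hle) hle)
    rw [integral_interval_sub_left (hII hg _ (left_mem_Icc.2 hab) _ (hmem _ hi))
      (hII hg _ (left_mem_Icc.2 hab) _ (hmem _ hi.le))]
    nlinarith
  have hsum := Finset.sum_le_sum fun i hi => hpiece i (Finset.mem_range.1 hi)
  rw [Finset.sum_sub_distrib, ← Finset.mul_sum, Finset.sum_range_sub (fun i => K (u i)),
    sum_integral_adjacent_intervals fun i hi =>
      hII (hK.integrableOn_mul hg) _ (hmem i hi.le) _ (hmem (i + 1) hi), hu0, hun] at hsum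
  have habel := le_sum_range_mul_sub (k := fun i => K (u i)) (w := fun i => ∫ v in a..u i, g v)
    (M := M) n (fun i hi => hK (hmem i hi.le) (hmem (i + 1) hi) (hu i.le_succ))
    (by simp [hu0]) (fun i hi => hM _ (hmem i hi))
  simp only [hu0, hun] at habel
  linarith

theorem AntitoneOn.monotoneOn_comp_sub {F : ℝ → ℝ} (hF : AntitoneOn F (Ici 0)) (a t : ℝ) :
    MonotoneOn (fun u => F (t - u)) (Icc a t) := fun _ hx _ hy hxy =>
  hF (sub_nonneg.2 hy.2) (sub_nonneg.2 hx.2) (by linarith)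

theorem integral_nonpos_of_mul_neg {F g h : ℝ → ℝ} {a c : ℝ} (hF : AntitoneOn F (Ici 0))
    (hFc : 0 < F (c - a)) (hg : IntegrableOn g (Icc a c))
    (hh : ∀ t ∈ Icc a c, h t = ∫ u in a..t, F (t - u) * g u)
    (hsign : ∀ u ∈ Icc a c, g u ≠ 0 → g u * h u < 0) :
    ∀ t ∈ Icc a c, ∫ u in a..t, g u ≤ 0 := by
  intro t ht
  have hac : a ≤ c := ht.1.trans ht.2
  set W : ℝ → ℝ := fun t => ∫ u in a..t, g u
  have hW : ContinuousOn W (Icc a c) := by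
    simpa [uIcc_of_le hac] using continuousOn_primitive_interval (μ := volume)
      (f := g) (a := a) (b := c) (by rwa [uIcc_of_le hac])
  obtain ⟨t₁, ht₁, hmax⟩ := isCompact_Icc.exists_isMaxOn ⟨a, left_mem_Icc.2 hac⟩ hW
  suffices hM : W t₁ ≤ 0 from (hmax ht).trans hM
  by_contra! hM
  set M := W t₁ with hMdef
  have hF0 : F (c - a) ≤ F 0 := hF self_mem_Ici (sub_nonneg.2 hac) (sub_nonneg.2 hac)
  have hF0pos : 0 < F 0 := hFc.trans_le hF0
  -- Abel's bound at a point where `W > L` is then at least `F (c - a) * M / 2 > 0`.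
  set L := M - F (c - a) * M / (2 * F 0)
  have hML : F 0 * (M - L) = F (c - a) * M / 2 := by
    simp only [L]; field_simp; ring
  have hLM : L < M := by
    have : 0 < F (c - a) * M / (2 * F 0) := by positivity
    linarith
  have hL : 0 ≤ L := by
    have : F (c - a) * M / (2 * F 0) ≤ M / 2 := by
      rw [div_le_iff₀ (by positivity)]; nlinarith
    linarith
  have hclosed : IsClosed (Icc a t₁ ∩ W ⁻¹' Iic L) :=
    (hW.mono (Icc_subset_Icc_right ht₁.2)).preimage_isClosed_of_isClosed isClosed_Icc
      isClosed_Iic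
  obtain ⟨r, ⟨hr, hWr⟩, hr_max⟩ : ∃ r, IsGreatest (Icc a t₁ ∩ W ⁻¹' Iic L) r :=
    (isCompact_Icc.of_isClosed_subset hclosed inter_subset_left).exists_isGreatest
      ⟨a, left_mem_Icc.2 ht₁.1, by simpa [W] using hL⟩
  simp only [mem_preimage, mem_Iic] at hWr
  have hrt₁ : r < t₁ := hr.2.lt_of_ne fun h => by
    rw [h, ← hMdef] at hWr; linarith
  have hrc : r ∈ Icc a c := ⟨hr.1, hr.2.trans ht₁.2⟩
  obtain ⟨b, hb, hgb⟩ : ∃ b ∈ Ioc r t₁, 0 < g b := by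
    by_contra! hneg
    have hint : ∫ u in r..t₁, g u ≤ 0 := by
      rw [integral_of_le hrt₁.le]; exact setIntegral_nonpos measurableSet_Ioc hneg
    have hII : ∀ x ∈ Icc a c, IntervalIntegrable g volume a x := fun x hx =>
      (hg.mono_set (uIcc_subset_Icc (left_mem_Icc.2 hac) hx)).intervalIntegrable
    rw [← integral_interval_sub_left (hII t₁ ht₁) (hII r hrc)] at hint
    change M - W r ≤ 0 at hint
    linarith
  have hbc : b ∈ Icc a c := ⟨hr.1.trans hb.1.le, hb.2.trans ht₁.2⟩
  have hhb : h b < 0 := neg_of_mul_neg_right (hsign b hbc hgb.ne') hgb.le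
  have hWb : L < W b := lt_of_not_ge fun hle =>
    (hr_max ⟨⟨hbc.1, hb.2⟩, hle⟩).not_gt hb.1
  have habel := add_le_integral_mul_of_monotoneOn hbc.1 (hF.monotoneOn_comp_sub a b)
    (hg.mono_set (Icc_subset_Icc_right hbc.2)) (M := M)
    fun s hs => hmax ⟨hs.1, hs.2.trans hbc.2⟩
  rw [sub_self, ← hh b hbc] at habel
  have h1 : F 0 * (L - M) < F 0 * (W b - M) := mul_lt_mul_of_pos_left (by linarith) hF0pos
  have h2 : F (c - a) * M ≤ F (b - a) * M :=
    mul_le_mul_of_nonneg_right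
      (hF (sub_nonneg.2 hbc.1) (sub_nonneg.2 hac) (by linarith [hbc.2])) hM.le
  have : 0 < F (c - a) * M := mul_pos hFc hM
  simp only [W] at h1
  linarith

theorem eqOn_zero_of_mul_neg {F g h : ℝ → ℝ} {a c : ℝ} (hF : AntitoneOn F (Ici 0))
    (hFc : 0 < F (c - a)) (hg : IntegrableOn g (Icc a c))
    (hh : ∀ t ∈ Icc a c, h t = ∫ u in a..t, F (t - u) * g u)
    (hsign : ∀ u ∈ Icc a c, g u ≠ 0 → g u * h u < 0) :
    EqOn h 0 (Icc a c) := by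
  have hh' : ∀ t ∈ Icc a c, (-h) t = ∫ u in a..t, F (t - u) * (-g) u := fun t ht => by
    simp [hh t ht, intervalIntegral.integral_neg]
  have hsign' : ∀ u ∈ Icc a c, (-g) u ≠ 0 → (-g) u * (-h) u < 0 := fun u hu hgu => by
    simpa using hsign u hu (by simpa using hgu)
  have hW : ∀ t ∈ Icc a c, ∫ u in a..t, g u = 0 := fun t ht =>
    le_antisymm (integral_nonpos_of_mul_neg hF hFc hg hh hsign t ht) <| by
      simpa [intervalIntegral.integral_neg] using
        integral_nonpos_of_mul_neg hF hFc hg.neg hh' hsign' t ht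
  have hlow : ∀ g' : ℝ → ℝ, IntegrableOn g' (Icc a c) →
      (∀ t ∈ Icc a c, ∫ u in a..t, g' u = 0) →
      ∀ t ∈ Icc a c, 0 ≤ ∫ u in a..t, F (t - u) * g' u := fun g' hg' hW' t ht => by
    simpa [hW' t ht] using add_le_integral_mul_of_monotoneOn (M := 0) ht.1
      (hF.monotoneOn_comp_sub a t) (hg'.mono_set (Icc_subset_Icc_right ht.2))
      fun s hs => (hW' s ⟨hs.1, hs.2.trans ht.2⟩).le
  intro t ht
  have h₁ := hlow g hg hW t ht
  have h₂ := hlow (-g) hg.neg (fun s hs => by simp [intervalIntegral.integral_neg, hW s hs]) t ht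
  rw [← hh t ht] at h₁
  rw [← hh' t ht, Pi.neg_apply, neg_nonneg] at h₂
  exact le_antisymm h₂ h₁

theorem eqOn_zero_of_volterra_mul_neg {F g h : ℝ → ℝ} {T : ℝ} (hF : AntitoneOn F (Ici 0))
    (hF_cont : ContinuousOn F (Ici 0)) (hF_nonneg : ∀ x ∈ Ici (0 : ℝ), 0 ≤ F x)
    (hg : IntegrableOn g (Icc 0 T)) (hh_cont : ContinuousOn h (Icc 0 T))
    (hh : ∀ t ∈ Icc 0 T, h t = ∫ u in (0 : ℝ)..t, F (t - u) * g u)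
    (hsign : ∀ u ∈ Icc 0 T, g u ≠ 0 → g u * h u < 0) :
    EqOn h 0 (Icc 0 T) := by
  rcases (hF_nonneg 0 self_mem_Ici).eq_or_lt with hF0 | hF0
  · intro t ht
    rw [hh t ht, Pi.zero_apply]
    refine (integral_congr fun u hu => ?_).trans integral_zero
    rw [uIcc_of_le ht.1] at hu
    have hFu := hF self_mem_Ici (sub_nonneg.2 hu.2) (sub_nonneg.2 hu.2)
    simp [le_antisymm (hF0 ▸ hFu) (hF_nonneg _ (sub_nonneg.2 hu.2))]
  obtain ⟨d, hFd, hd⟩ : ∃ d, 0 < F d ∧ d ∈ Ioi 0 :=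
    ((((hF_cont 0 self_mem_Ici).mono Ioi_subset_Ici_self).eventually
      (lt_mem_nhds hF0)).and self_mem_nhdsWithin).exists
  intro t ht
  rw [Pi.zero_apply]
  refine (inter_comm _ _ ▸ hh_cont.preimage_isClosed_of_isClosed isClosed_Icc
    isClosed_singleton).Icc_subset_of_forall_mem_nhdsGT_of_Icc_subset (b := T) ?_ ?_ ht
  · simp [hh 0 ⟨le_rfl, ht.1.trans ht.2⟩]
  intro t₀ ht₀ hzero
  set c := min (t₀ + d) T
  have ht₀c : t₀ < c := lt_min (by linarith [mem_Ioi.1 hd]) ht₀.2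
  have hg₀ : ∀ u ∈ Icc 0 t₀, g u = 0 := fun u hu => by
    by_contra hne
    simpa [show h u = 0 from hzero hu] using hsign u ⟨hu.1, hu.2.trans ht₀.2.le⟩ hne
  have hshift : ∀ t ∈ Icc t₀ c, h t = ∫ u in t₀..t, F (t - u) * g u := fun t ht => by
    have htT : t ∈ Icc 0 T := ⟨ht₀.1.trans ht.1, ht.2.trans (min_le_right _ _)⟩
    have hint : IntegrableOn (fun u => F (t - u) * g u) (Icc 0 t) :=
      (hg.mono_set (Icc_subset_Icc_right htT.2)).continuousOn_mul
        (hF_cont.comp (continuousOn_const.sub continuousOn_id) fun u hu => sub_nonneg.2 hu.2)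
        isCompact_Icc
    rw [hh t htT, ← integral_add_adjacent_intervals (b := t₀)
      ((intervalIntegrable_iff_integrableOn_Icc_of_le ht₀.1).2
        (hint.mono_set (Icc_subset_Icc_right ht.1)))
      ((intervalIntegrable_iff_integrableOn_Icc_of_le ht.1).2
        (hint.mono_set (Icc_subset_Icc_left ht₀.1))),
      integral_congr (g := 0) fun u hu => by
        rw [uIcc_of_le ht₀.1] at hu; simp [hg₀ u hu]]
    simp
  have hFc : 0 < F (c - t₀) := hFd.trans_le <|
    hF (sub_nonneg.2 ht₀c.le) (mem_Ioi.1 hd).le (by linarith [min_le_left (t₀ + d) T])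
  have := eqOn_zero_of_mul_neg hF hFc (hg.mono_set (Icc_subset_Icc ht₀.1 (min_le_right _ _)))
    hshift fun u hu => hsign u ⟨ht₀.1.trans hu.1, hu.2.trans (min_le_right _ _)⟩
  exact Filter.mem_of_superset (Ioo_mem_nhdsGT ht₀c) fun u hu => this (Ioo_subset_Icc_self hu)

theorem integrableOn_ite_lt {ρ φ : ℝ → ℝ} {s : Set ℝ} {c : ℝ} (hs : MeasurableSet s)
    (hρ : ContinuousOn ρ s) (hφ : IntegrableOn φ s) :
    IntegrableOn (fun u => if ρ u < c then φ u else 0) s := by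
  have hset : NullMeasurableSet {u | ρ u < c} (volume.restrict s) :=
    nullMeasurableSet_lt (hρ.aemeasurable hs) aemeasurable_const
  refine (hφ.indicator₀ hset).congr (ae_of_all _ fun u => ?_)
  simp [Set.indicator_apply]

theorem integral_ite_sub_integral_ite {ρ₁ ρ₂ k l : ℝ → ℝ} {a b c : ℝ} (hab : a ≤ b)
    (hρ₁ : ContinuousOn ρ₁ (Icc a b)) (hρ₂ : ContinuousOn ρ₂ (Icc a b))
    (hk : ContinuousOn k (Icc a b)) (hl : IntegrableOn l (Icc a b)) :
    (∫ u in a..b, if ρ₁ u < c then k u * l u else 0) -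
        (∫ u in a..b, if ρ₂ u < c then k u * l u else 0) =
      ∫ u in a..b, k u * ((if ρ₁ u < c then l u else 0) - (if ρ₂ u < c then l u else 0)) := by
  have hkl : IntegrableOn (fun u => k u * l u) (Icc a b) := hl.continuousOn_mul hk isCompact_Icc
  have hI : ∀ ρ : ℝ → ℝ, ContinuousOn ρ (Icc a b) →
      IntervalIntegrable (fun u => if ρ u < c then k u * l u else 0) volume a b := fun ρ hρ =>
    (intervalIntegrable_iff_integrableOn_Icc_of_le hab).2
      (integrableOn_ite_lt measurableSet_Icc hρ hkl)
  rw [← integral_sub (hI ρ₁ hρ₁) (hI ρ₂ hρ₂)]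
  congr 1 with u
  split_ifs <;> ring

theorem ite_sub_ite_mul_sub_neg {x y c l : ℝ} (hl : 0 ≤ l)
    (h : (if x < c then l else 0) - (if y < c then l else 0) ≠ 0) :
    ((if x < c then l else 0) - (if y < c then l else 0)) * (x - y) < 0 := by
  split_ifs at h ⊢ with hx hy hy
  · simp at h
  · have : 0 < l := lt_of_le_of_ne hl (Ne.symm (by simpa using h))
    nlinarith
  · have : 0 < l := lt_of_le_of_ne hl (Ne.symm (by simpa using h))
    nlinarith
  · simp at h

theorem stmt_18_general (T : ℝ) (lam F G ρ1 ρ2 : ℝ → ℝ) (ρ0 : ℝ)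
    (hlam_int : IntegrableOn lam (Icc 0 T))
    (hlam_nonneg : ∀ u ∈ Icc (0:ℝ) T, 0 ≤ lam u)
    (hF_mono : AntitoneOn F (Ici 0)) (hF_cont : ContinuousOn F (Ici 0))
    (hF_range : ∀ x ∈ Ici (0:ℝ), F x ∈ Icc (0:ℝ) 1)
    (hρ1_cont : ContinuousOn ρ1 (Icc 0 T))
    (hρ2_cont : ContinuousOn ρ2 (Icc 0 T))
    (heq1 : ∀ t ∈ Icc (0:ℝ) T,
      ρ1 t = ρ0 * G t + ∫ u in (0:ℝ)..t, (if ρ1 u < 1 then F (t - u) * lam u else 0))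
    (heq2 : ∀ t ∈ Icc (0:ℝ) T,
      ρ2 t = ρ0 * G t + ∫ u in (0:ℝ)..t, (if ρ2 u < 1 then F (t - u) * lam u else 0)) :
    ∀ t ∈ Icc (0:ℝ) T, ρ1 t = ρ2 t := by
  set g : ℝ → ℝ := fun u => (if ρ1 u < 1 then lam u else 0) - (if ρ2 u < 1 then lam u else 0)
  have hg : IntegrableOn g (Icc 0 T) :=
    (integrableOn_ite_lt measurableSet_Icc hρ1_cont hlam_int).sub
      (integrableOn_ite_lt measurableSet_Icc hρ2_cont hlam_int)
  have hdiff : ∀ t ∈ Icc (0:ℝ) T, ρ1 t - ρ2 t = ∫ u in (0:ℝ)..t, F (t - u) * g u := by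
    intro t ht
    have hsub : Icc 0 t ⊆ Icc 0 T := Icc_subset_Icc_right ht.2
    rw [heq1 t ht, heq2 t ht, add_sub_add_left_eq_sub]
    exact integral_ite_sub_integral_ite ht.1 (hρ1_cont.mono hsub) (hρ2_cont.mono hsub)
      (hF_cont.comp (continuousOn_const.sub continuousOn_id) fun u hu => sub_nonneg.2 hu.2)
      (hlam_int.mono_set hsub)
  have hzero := eqOn_zero_of_volterra_mul_neg hF_mono hF_cont (fun x hx => (hF_range x hx).1)
    hg (hρ1_cont.sub hρ2_cont) hdiff fun u hu => ite_sub_ite_mul_sub_neg (hlam_nonneg u hu)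
  exact fun t ht => sub_eq_zero.1 (hzero ht)

theorem stmt_18 (T : ℝ) (hT : 0 < T) (lam F G ρ1 ρ2 : ℝ → ℝ) (ρ0 : ℝ)
    (hρ0 : ρ0 ∈ Icc (0:ℝ) 1)
    (hlam_int : IntegrableOn lam (Icc 0 T))
    (hlam_nonneg : ∀ u ∈ Icc (0:ℝ) T, 0 ≤ lam u)
    (hF_mono : AntitoneOn F (Ici 0)) (hF_cont : ContinuousOn F (Ici 0))
    (hF_range : ∀ x ∈ Ici (0:ℝ), F x ∈ Icc (0:ℝ) 1)
    (hG_mono : AntitoneOn G (Ici 0)) (hG_cont : ContinuousOn G (Ici 0))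
    (hG_range : ∀ x ∈ Ici (0:ℝ), G x ∈ Icc (0:ℝ) 1)
    (hρ1_cont : ContinuousOn ρ1 (Icc 0 T))
    (hρ1_range : ∀ t ∈ Icc (0:ℝ) T, ρ1 t ∈ Icc (0:ℝ) 1)
    (hρ2_cont : ContinuousOn ρ2 (Icc 0 T))
    (hρ2_range : ∀ t ∈ Icc (0:ℝ) T, ρ2 t ∈ Icc (0:ℝ) 1)
    (heq1 : ∀ t ∈ Icc (0:ℝ) T,
      ρ1 t = ρ0 * G t + ∫ u in (0:ℝ)..t, (if ρ1 u < 1 then F (t - u) * lam u else 0))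
    (heq2 : ∀ t ∈ Icc (0:ℝ) T,
      ρ2 t = ρ0 * G t + ∫ u in (0:ℝ)..t, (if ρ2 u < 1 then F (t - u) * lam u else 0)) :
    ∀ t ∈ Icc (0:ℝ) T, ρ1 t = ρ2 t :=
  stmt_18_general T lam F G ρ1 ρ2 ρ0 hlam_int hlam_nonneg hF_mono hF_cont hF_range hρ1_cont hρ2_cont
    heq1 heq2
end
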